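/- arXiv:math/0605119 — 4 statements merged into one kernel-verified Lean document; each statement's English description precedes it below -/
import Mathlib

section
/- Every monomial ideal I in the polynomial ring S = K[x,y] in two variables over a field K is pretty clean. -/
open MvPolynomial

/-- The monomial `x^a` in `K[x_i : i ∈ σ]`. -/
noncomputable def mono (K : Type*) [Field K] {σ : Type*} (a : σ →₀ ℕ) :
    MvPolynomial σ K :=
  MvPolynomial.monomial a 1

/-- An ideal is a monomial ideal if it is generated by monomials. -/
def IsMonomialIdeal {K : Type*} [Field K] {σ : Type*}
    (I : Ideal (MvPolynomial σ K)) : Prop :=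
  ∃ A : Set (σ →₀ ℕ), I = Ideal.span ((fun a => mono K a) '' A)

/-- `IsPrimeFiltration I c u` says that `c` is a chain of (monomial) ideals
`I = I₀ ⊆ I₁ ⊆ ⋯ ⊆ I_r = S` with `I_j = I_{j-1} + (x^{u j})` and
`I_{j-1} : x^{u j}` a prime ideal, i.e. `I_j/I_{j-1} ≅ S/P_j`. -/
def IsPrimeFiltration {K : Type*} [Field K] {σ : Type*}
    (I : Ideal (MvPolynomial σ K)) {r : ℕ}
    (c : Fin (r + 1) → Ideal (MvPolynomial σ K)) (u : Fin r → (σ →₀ ℕ)) : Prop :=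
  c 0 = I ∧ c (Fin.last r) = ⊤ ∧
    (∀ j : Fin r, c j.succ = c j.castSucc ⊔ Ideal.span {mono K (u j)}) ∧
    (∀ j : Fin r, ((c j.castSucc).colon (Ideal.span {mono K (u j)})).IsPrime)

/-- The `j`-th prime factor `P_j = I_{j-1} : u_j` of a prime filtration. -/
noncomputable def filtFactor {K : Type*} [Field K] {σ : Type*} {r : ℕ}
    (c : Fin (r + 1) → Ideal (MvPolynomial σ K)) (u : Fin r → (σ →₀ ℕ)) (j : Fin r) :
    Ideal (MvPolynomial σ K) :=
  (c j.castSucc).colon (Ideal.span {mono K (u j)})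

/-- A prime filtration is pretty clean if `i < j` and `P_i ⊆ P_j` imply `P_i = P_j`. -/
def IsPrettyCleanFiltration {K : Type*} [Field K] {σ : Type*}
    (I : Ideal (MvPolynomial σ K)) {r : ℕ}
    (c : Fin (r + 1) → Ideal (MvPolynomial σ K)) (u : Fin r → (σ →₀ ℕ)) : Prop :=
  IsPrimeFiltration I c u ∧
    ∀ i j : Fin r, i < j → filtFactor c u i ≤ filtFactor c u j →
      filtFactor c u i = filtFactor c u j

/-- A monomial ideal is pretty clean if it admits a pretty clean filtration. -/
def IsPrettyClean {K : Type*} [Field K] {σ : Type*}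
    (I : Ideal (MvPolynomial σ K)) : Prop :=
  ∃ (r : ℕ) (c : Fin (r + 1) → Ideal (MvPolynomial σ K)) (u : Fin r → (σ →₀ ℕ)),
    IsPrettyCleanFiltration I c u

/-- A prime filtration is clean if its support is the set of minimal primes of `I`. -/
def IsCleanFiltration {K : Type*} [Field K] {σ : Type*}
    (I : Ideal (MvPolynomial σ K)) {r : ℕ}
    (c : Fin (r + 1) → Ideal (MvPolynomial σ K)) (u : Fin r → (σ →₀ ℕ)) : Prop :=
  IsPrimeFiltration I c u ∧
    {P | ∃ j : Fin r, filtFactor c u j = P} = I.minimalPrimes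

/-- A monomial ideal is clean if it admits a clean filtration. -/
def IsClean {K : Type*} [Field K] {σ : Type*}
    (I : Ideal (MvPolynomial σ K)) : Prop :=
  ∃ (r : ℕ) (c : Fin (r + 1) → Ideal (MvPolynomial σ K)) (u : Fin r → (σ →₀ ℕ)),
    IsCleanFiltration I c u

/-!
A monomial ideal is spanned by the monomials whose exponents form an upper set `U ⊆ ℕ²`, and its
colon ideal by `x^q` is spanned by the upper set `{v | v + q ∈ U}`. In two variables a nonzero
monomial ideal is `x^p · J` with `J` of finite colength: `U ⊆ p + ℕ²` with finite complement
there. Adding the missing monomials one at a time, always a maximal one, every step has colon ideal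
`(x, y)`. Once `U = p + ℕ²`, dividing `x^p` by one variable at a time down to `1` gives colon ideals
`(x)` or `(y)`. As `(x, y)` lies in neither `(x)` nor `(y)`, which are incomparable, the filtration
is pretty clean. The zero ideal has the filtration `0 ⊂ S` with the prime factor `0`.
-/

open Set

section

variable {K σ : Type*} [Field K]

def HasPrettyCleanFiltrationIn (I : Ideal (MvPolynomial σ K))
    (Ps : Set (Ideal (MvPolynomial σ K))) : Prop :=
  ∃ (r : ℕ) (c : Fin (r + 1) → Ideal (MvPolynomial σ K)) (u : Fin r → σ →₀ ℕ),
    IsPrettyCleanFiltration I c u ∧ ∀ j, filtFactor c u j ∈ Ps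

section Cons

variable {I : Ideal (MvPolynomial σ K)} {r : ℕ} {c : Fin (r + 1) → Ideal (MvPolynomial σ K)}
  {u : Fin r → σ →₀ ℕ} {a : σ →₀ ℕ}

theorem filtFactor_cons_zero :
    filtFactor (Fin.cons I c) (Fin.cons a u) 0 = I.colon (Ideal.span {mono K a}) := rfl

theorem filtFactor_cons_succ (j : Fin r) :
    filtFactor (Fin.cons I c) (Fin.cons a u) j.succ = filtFactor c u j := by
  simp only [filtFactor, ← Fin.succ_castSucc, Fin.cons_succ]

theorem IsPrimeFiltration.cons (h : IsPrimeFiltration (I ⊔ Ideal.span {mono K a}) c u)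
    (ha : (I.colon (Ideal.span {mono K a})).IsPrime) :
    IsPrimeFiltration I (Fin.cons I c) (Fin.cons a u) := by
  obtain ⟨h0, hlast, hstep, hprime⟩ := h
  refine ⟨rfl, by rwa [← Fin.succ_last, Fin.cons_succ], ?_, ?_⟩
  · refine Fin.cases (by simpa using h0) fun j => ?_
    simpa only [← Fin.succ_castSucc, Fin.cons_succ] using hstep j
  · refine Fin.cases ha fun j => ?_
    simpa only [← Fin.succ_castSucc, Fin.cons_succ] using hprime j

end Cons

namespace HasPrettyCleanFiltrationIn

variable {I : Ideal (MvPolynomial σ K)} {Ps : Set (Ideal (MvPolynomial σ K))}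

theorem isPrettyClean (h : HasPrettyCleanFiltrationIn I Ps) : IsPrettyClean I :=
  let ⟨r, c, u, hc, _⟩ := h
  ⟨r, c, u, hc⟩

theorem top (Ps : Set (Ideal (MvPolynomial σ K))) : HasPrettyCleanFiltrationIn ⊤ Ps :=
  ⟨0, fun _ => ⊤, Fin.elim0, ⟨⟨rfl, rfl, fun j => j.elim0, fun j => j.elim0⟩, fun i => i.elim0⟩,
    fun j => j.elim0⟩

theorem cons (a : σ →₀ ℕ) (ha : (I.colon (Ideal.span {mono K a})).IsPrime)
    (hmin : ∀ P ∈ Ps, I.colon (Ideal.span {mono K a}) ≤ P → I.colon (Ideal.span {mono K a}) = P)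
    (h : HasPrettyCleanFiltrationIn (I ⊔ Ideal.span {mono K a}) Ps) :
    HasPrettyCleanFiltrationIn I (insert (I.colon (Ideal.span {mono K a})) Ps) := by
  obtain ⟨r, c, u, ⟨hc, hclean⟩, hPs⟩ := h
  refine ⟨r + 1, Fin.cons I c, Fin.cons a u, ⟨hc.cons ha, ?_⟩, ?_⟩
  · intro i j hij
    induction j using Fin.cases with
    | zero => exact absurd hij (Fin.not_lt_zero i)
    | succ j =>
      induction i using Fin.cases with
      | zero => simpa only [filtFactor_cons_zero, filtFactor_cons_succ] using hmin _ (hPs j)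
      | succ i =>
        simpa only [filtFactor_cons_succ] using hclean i j (Fin.succ_lt_succ_iff.mp hij)
  · refine Fin.cases (mem_insert _ _) fun j => ?_
    rw [filtFactor_cons_succ]
    exact mem_insert_of_mem _ (hPs j)

theorem mono (h : HasPrettyCleanFiltrationIn I Ps) {Qs : Set (Ideal (MvPolynomial σ K))}
    (hPQ : Ps ⊆ Qs) : HasPrettyCleanFiltrationIn I Qs :=
  let ⟨r, c, u, hc, hPs⟩ := h
  ⟨r, c, u, hc, fun j => hPQ (hPs j)⟩

end HasPrettyCleanFiltrationIn

section MonomialSpan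

variable (K) in
noncomputable def monomialSpan (U : Set (σ →₀ ℕ)) : Ideal (MvPolynomial σ K) :=
  Ideal.span ((fun a => mono K a) '' U)

variable {U : Set (σ →₀ ℕ)}

theorem mem_monomialSpan_iff (hU : IsUpperSet U) {f : MvPolynomial σ K} :
    f ∈ monomialSpan K U ↔ ∀ a ∈ f.support, a ∈ U := by
  simp only [monomialSpan, mono, mem_ideal_span_monomial_image]
  exact forall₂_congr fun a _ => ⟨fun ⟨b, hb, hba⟩ => hU hba hb, fun ha => ⟨a, ha, le_rfl⟩⟩

theorem mono_mem_monomialSpan_iff (hU : IsUpperSet U) {a : σ →₀ ℕ} :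
    mono K a ∈ monomialSpan K U ↔ a ∈ U := by
  classical
  simp [mem_monomialSpan_iff hU, mono, support_monomial]

theorem monomialSpan_union (U V : Set (σ →₀ ℕ)) :
    monomialSpan K (U ∪ V) = monomialSpan K U ⊔ monomialSpan K V := by
  rw [monomialSpan, image_union, Ideal.span_union]
  rfl

theorem monomialSpan_upperClosure (A : Set (σ →₀ ℕ)) :
    monomialSpan K (upperClosure A) = monomialSpan K A := by
  ext f
  simp only [monomialSpan, mono, mem_ideal_span_monomial_image, SetLike.mem_coe, mem_upperClosure]
  exact forall₂_congr fun a _ =>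
    ⟨fun ⟨_, ⟨c, hc, hcb⟩, hba⟩ => ⟨c, hc, hcb.trans hba⟩,
      fun ⟨b, hb, hba⟩ => ⟨b, ⟨b, hb, le_rfl⟩, hba⟩⟩

theorem span_mono_zero : Ideal.span {mono K (0 : σ →₀ ℕ)} = ⊤ :=
  Ideal.span_singleton_one

theorem monomialSpan_Ici (p : σ →₀ ℕ) :
    monomialSpan K (Ici p) = Ideal.span {mono K p} := by
  rw [← UpperSet.coe_Ici, ← upperClosure_singleton, monomialSpan_upperClosure, monomialSpan,
    image_singleton]

theorem colon_monomialSpan (hU : IsUpperSet U) (q : σ →₀ ℕ) :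
    (monomialSpan K U).colon (Ideal.span {mono K q}) = monomialSpan K {v | v + q ∈ U} := by
  ext f
  have hUq : IsUpperSet {v | v + q ∈ U} := fun _ _ hvw hv => hU (add_le_add_left hvw q) hv
  rw [Ideal.mem_colon_span_singleton, mem_monomialSpan_iff hU, mem_monomialSpan_iff hUq]
  have hsupp : (f * mono K q).support = f.support.map (addRightEmbedding q) :=
    AddMonoidAlgebra.support_coeff_mul_single f 1 (by simp) q
  simp [hsupp]

end MonomialSpan

section Primes

theorem isPrime_span_X (i : σ) : (Ideal.span {(X i : MvPolynomial σ K)}).IsPrime :=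
  (Ideal.span_singleton_prime (X_ne_zero i)).2 X_prime

theorem span_X_le_span_X_iff {i j : σ} :
    Ideal.span {(X i : MvPolynomial σ K)} ≤ Ideal.span {X j} ↔ i = j := by
  rw [Ideal.span_singleton_le_span_singleton, X_dvd_X, eq_comm]

theorem isUpperSet_compl_zero : IsUpperSet ({0}ᶜ : Set (σ →₀ ℕ)) :=
  fun _ _ hab ha hb => ha (nonpos_iff_eq_zero.1 (hb ▸ hab))

theorem monomialSpan_compl_zero :
    monomialSpan K ({0}ᶜ : Set (σ →₀ ℕ)) = RingHom.ker constantCoeff := by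
  ext f
  rw [mem_monomialSpan_iff isUpperSet_compl_zero, RingHom.mem_ker, constantCoeff_eq]
  simp only [mem_compl_singleton_iff, mem_support_iff]
  exact ⟨fun h => not_not.1 fun h0 => h 0 h0 rfl, fun h a ha ha0 => ha (ha0 ▸ h)⟩

theorem isPrime_monomialSpan_compl_zero :
    (monomialSpan K ({0}ᶜ : Set (σ →₀ ℕ))).IsPrime := by
  rw [monomialSpan_compl_zero]
  exact RingHom.ker_isPrime _

theorem span_X_le_monomialSpan_compl_zero (i : σ) :
    Ideal.span {(X i : MvPolynomial σ K)} ≤ monomialSpan K {0}ᶜ := by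
  rw [Ideal.span_singleton_le_iff_mem]
  exact (mono_mem_monomialSpan_iff isUpperSet_compl_zero).2
    (Finsupp.single_ne_zero.2 one_ne_zero)

end Primes

theorem hasPrettyCleanFiltrationIn_span_mono (p : σ →₀ ℕ) :
    HasPrettyCleanFiltrationIn (Ideal.span {mono K p}) (range fun i => Ideal.span {X i}) := by
  induction p using WellFoundedLT.induction with
  | _ p ih =>
  rcases eq_or_ne p 0 with rfl | hp
  · rw [span_mono_zero]
    exact .top _
  obtain ⟨i, hi⟩ := Finsupp.ne_iff.1 hp
  set p' := p - Finsupp.single i 1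
  have hp' : p' + Finsupp.single i 1 = p :=
    tsub_add_cancel_of_le (Finsupp.single_le_iff.2 (Nat.one_le_iff_ne_zero.2 hi))
  have hlt : p' < p :=
    hp' ▸ lt_add_of_pos_right _ (pos_iff_ne_zero.2 (Finsupp.single_ne_zero.2 one_ne_zero))
  have hcolon : (Ideal.span {mono K p}).colon (Ideal.span {mono K p'}) = Ideal.span {X i} := by
    rw [← monomialSpan_Ici, colon_monomialSpan (isUpperSet_Ici _), ← hp']
    change _ = Ideal.span {mono K (Finsupp.single i 1)}
    rw [← monomialSpan_Ici]
    congr 1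
    ext v
    rw [mem_ofPred_eq, mem_Ici, mem_Ici, add_comm v, add_le_add_iff_left]
  have hsup : Ideal.span {mono K p} ⊔ Ideal.span {mono K p'} = Ideal.span {mono K p'} :=
    sup_eq_right.2 (Ideal.span_singleton_le_span_singleton.2
      (monomial_one_dvd_monomial_one.2 hlt.le))
  have hstep := (hsup ▸ ih p' hlt).cons p' (hcolon ▸ isPrime_span_X i) (by
    rintro _ ⟨j, rfl⟩ hij
    rw [hcolon] at hij ⊢
    rw [span_X_le_span_X_iff.1 hij])
  rwa [hcolon, insert_eq_of_mem (s := range fun j => Ideal.span {X j}) ⟨i, rfl⟩] at hstep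

theorem hasPrettyCleanFiltrationIn_monomialSpan_of_finite_diff {U : Set (σ →₀ ℕ)}
    (hU : IsUpperSet U) {p : σ →₀ ℕ} (hUp : U ⊆ Ici p) (hfin : (Ici p \ U).Finite) :
    HasPrettyCleanFiltrationIn (monomialSpan K U)
      (insert (monomialSpan K {0}ᶜ) (range fun i => Ideal.span {X i})) := by
  induction hn : (Ici p \ U).ncard using Nat.strong_induction_on generalizing U with
  | _ n ih =>
  rcases (Ici p \ U).eq_empty_or_nonempty with hempty | hne
  · rw [hUp.antisymm (sdiff_eq_empty.1 hempty), monomialSpan_Ici]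
    exact (hasPrettyCleanFiltrationIn_span_mono p).mono (subset_insert _ _)
  obtain ⟨q, hq⟩ := hfin.exists_maximal hne
  have hcolon : (monomialSpan K U).colon (Ideal.span {mono K q}) = monomialSpan K {0}ᶜ := by
    rw [colon_monomialSpan hU]
    congr 1
    ext v
    refine ⟨fun hv (hv0 : v = 0) => hq.prop.2 (by subst hv0; simpa using hv), fun hv => ?_⟩
    by_contra hvU
    have hvq : v + q ∈ Ici p \ U := ⟨mem_Ici.2 ((mem_Ici.1 hq.prop.1).trans le_add_self), hvU⟩
    exact hv (nonpos_iff_eq_zero.1 (add_le_iff_nonpos_left.1 (hq.2 hvq le_add_self)))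
  have hss : Ici p \ (U ∪ Ici q) ⊂ Ici p \ U :=
    (ssubset_iff_of_subset (sdiff_subset_sdiff_right subset_union_left)).2
      ⟨q, hq.prop, fun h => h.2 (Or.inr (mem_Ici.2 le_rfl))⟩
  have hrest := ih _ (hn ▸ ncard_lt_ncard hss hfin) (hU.union (isUpperSet_Ici q))
    (union_subset hUp (Ici_subset_Ici.2 hq.prop.1)) (hfin.subset hss.subset) rfl
  rw [monomialSpan_union, monomialSpan_Ici] at hrest
  have hstep := hrest.cons q (hcolon ▸ isPrime_monomialSpan_compl_zero) (by
    rw [hcolon]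
    rintro P (rfl | ⟨i, rfl⟩) hP
    · rfl
    · exact hP.antisymm (span_X_le_monomialSpan_compl_zero i))
  rwa [hcolon, insert_idem] at hstep

theorem isPrettyClean_bot : IsPrettyClean (⊥ : Ideal (MvPolynomial σ K)) := by
  have hcolon : (⊥ : Ideal (MvPolynomial σ K)).colon (Ideal.span {mono K (0 : σ →₀ ℕ)}) = ⊥ := by
    rw [span_mono_zero, Submodule.top_coe, Submodule.colon_univ]
  have hsup : ⊥ ⊔ Ideal.span {mono K (0 : σ →₀ ℕ)} = ⊤ := by rw [span_mono_zero, bot_sup_eq]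
  refine (HasPrettyCleanFiltrationIn.cons (Ps := ∅) 0 ?_ (fun _ h => absurd h (notMem_empty _))
    ?_).isPrettyClean
  · rw [hcolon]
    exact Ideal.isPrime_bot
  · rw [hsup]
    exact .top ∅

theorem exists_subset_Ici_finite_diff {U : Set (Fin 2 →₀ ℕ)} (hU : IsUpperSet U)
    (hne : U.Nonempty) :
    ∃ p, U ⊆ Ici p ∧ (Ici p \ U).Finite := by
  set a := Function.argminOn (· 1) U hne
  set b := Function.argminOn (· 0) U hne
  have ha : a ∈ U := Function.argminOn_mem _ _ _
  have hb : b ∈ U := Function.argminOn_mem _ _ _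
  have ha1 : ∀ c ∈ U, a 1 ≤ c 1 := fun c hc => Function.argminOn_le (· 1) U hc
  have hb0 : ∀ c ∈ U, b 0 ≤ c 0 := fun c hc => Function.argminOn_le (· 0) U hc
  -- A point `c ≥ a ⊓ b` outside `U` is above neither `a` nor `b`, so it lies below `a ⊔ b`.
  refine ⟨a ⊓ b, fun c hc => ?_, (finite_Iic (a ⊔ b)).subset fun c ⟨hc, hcU⟩ => ?_⟩
  · have := ha1 c hc
    have := hb0 c hc
    simp only [mem_Ici, Finsupp.le_def, Fin.forall_fin_two, Finsupp.inf_apply]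
    omega
  · have hca : ¬ a ≤ c := fun h => hcU (hU h ha)
    have hcb : ¬ b ≤ c := fun h => hcU (hU h hb)
    have := ha1 b hb
    have := hb0 a ha
    simp only [mem_Ici, mem_Iic, Finsupp.le_def, Fin.forall_fin_two, Finsupp.inf_apply,
      Finsupp.sup_apply] at hc hca hcb ⊢
    omega

end

/-- Every monomial ideal in `S = K[x,y]` is pretty clean. -/
theorem prettyClean_of_two_variables
    {K : Type*} [Field K] (I : Ideal (MvPolynomial (Fin 2) K))
    (hI : IsMonomialIdeal I) :
    IsPrettyClean I := by
  obtain ⟨A, rfl⟩ := hI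
  rcases A.eq_empty_or_nonempty with rfl | hA
  · rw [image_empty, Ideal.span_empty]
    exact isPrettyClean_bot
  change IsPrettyClean (monomialSpan K A)
  rw [← monomialSpan_upperClosure]
  obtain ⟨p, hUp, hfin⟩ :=
    exists_subset_Ici_finite_diff (upperClosure A).upper (hA.mono subset_upperClosure)
  exact (hasPrettyCleanFiltrationIn_monomialSpan_of_finite_diff (upperClosure A).upper hUp
    hfin).isPrettyClean
end

section
/- Every monomial ideal in a polynomial ring in at most three variables over a field is pretty clean. -/
open MvPolynomial

/-!
A monomial ideal `I` is encoded by the upper set `U ⊆ ℕⁿ` of its exponents. Adding `x^p` to `I`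
contributes the factor `I : x^p`, which is the prime `P_T = (x_i : i ∈ T)` exactly when
`p + w ∈ U ↔ ∃ i ∈ T, w i ≠ 0`. A prime filtration by such primes with non-increasing heights `#T`
is pretty clean, because `P_T ⊆ P_T'` forces `T ⊆ T'`.

The filtration is built in phases, each terminating by Dickson's lemma. First, socle monomials
(`p ∉ U` with every `p + e_i ∈ U`, factor of height `n`) are added until `I : 𝔪 = I`. In at most
three variables a saturated `U` is either principal, and is then peeled off one variable at a time
(height `1`), or has a corner of height `2` whose addition keeps `U` saturated: on a maximal line
parallel to an axis that misses `U`, take the first point above which both transversal directions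
meet `U`.
-/

open Set

section UpperSets

variable {α : Type*} [Preorder α]

instance UpperSet.wellFoundedLT [WellQuasiOrderedLE α] : WellFoundedLT (UpperSet α) := by
  rw [WellFoundedLT, isWellFounded_iff, RelEmbedding.wellFounded_iff_isEmpty]
  refine ⟨fun f ↦ ?_⟩
  have hlt : ∀ n, (f n : Set α) ⊂ f (n + 1) := fun n ↦
    UpperSet.coe_ssubset_coe.mpr (f.map_rel_iff.mpr n.lt_succ_self)
  choose p hp hpn using fun n ↦ Set.exists_of_ssubset (hlt n)
  obtain ⟨m, n, hmn, hle⟩ := wellQuasiOrdered_le p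
  have hsub : (f (m + 1) : Set α) ⊆ f n := by
    rcases (Nat.succ_le_of_lt hmn).eq_or_lt with rfl | h
    · rfl
    · exact (UpperSet.coe_ssubset_coe.mpr (f.map_rel_iff.mpr h)).subset
  exact hpn n ((f n).upper hle (hsub (hp m)))

theorem IsUpperSet.induction [WellQuasiOrderedLE α] {P : ∀ U : Set α, IsUpperSet U → Prop}
    (step : ∀ U hU, (∀ p ∉ U, P (U ∪ Ici p) (hU.union (isUpperSet_Ici p))) → P U hU)
    (U : Set α) (hU : IsUpperSet U) : P U hU := by
  suffices ∀ V : UpperSet α, P V V.upper from this ⟨U, hU⟩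
  intro V
  induction V using WellFoundedLT.induction with
  | _ V ih =>
    refine step V V.upper fun p hp ↦ ?_
    have hlt : V ⊓ UpperSet.Ici p < V :=
      UpperSet.coe_ssubset_coe.mp <| by
        simpa using fun h ↦ hp (h le_rfl)
    simpa using ih _ hlt

end UpperSets

section MonomialIdeals

variable {σ K : Type*} [Field K]

noncomputable def monomialIdeal (K : Type*) [Field K] (U : Set (σ →₀ ℕ)) :
    Ideal (MvPolynomial σ K) :=
  Ideal.span ((fun a ↦ mono K a) '' U)

theorem mem_monomialIdeal_iff_exists_le {U : Set (σ →₀ ℕ)} {f : MvPolynomial σ K} :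
    f ∈ monomialIdeal K U ↔ ∀ d ∈ f.support, ∃ u ∈ U, u ≤ d :=
  mem_ideal_span_monomial_image

theorem IsUpperSet.mem_monomialIdeal {U : Set (σ →₀ ℕ)} (hU : IsUpperSet U)
    {f : MvPolynomial σ K} : f ∈ monomialIdeal K U ↔ ∀ d ∈ f.support, d ∈ U := by
  rw [mem_monomialIdeal_iff_exists_le]
  exact forall₂_congr fun d _ ↦ ⟨fun ⟨u, hu, hud⟩ ↦ hU hud hu, fun hd ↦ ⟨d, hd, le_rfl⟩⟩

theorem monomialIdeal_upperClosure (A : Set (σ →₀ ℕ)) :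
    monomialIdeal K (upperClosure A : Set (σ →₀ ℕ)) = monomialIdeal K A := by
  ext f
  simp only [(upperClosure A).upper.mem_monomialIdeal, mem_monomialIdeal_iff_exists_le,
    SetLike.mem_coe, mem_upperClosure]

theorem monomialIdeal_union_Ici (U : Set (σ →₀ ℕ)) (p : σ →₀ ℕ) :
    monomialIdeal K (U ∪ Ici p) = monomialIdeal K U ⊔ Ideal.span {mono K p} := by
  have hIci : monomialIdeal K (Ici p) = Ideal.span {mono K p} := by
    rw [show Ici p = (upperClosure {p} : Set (σ →₀ ℕ)) by simp, monomialIdeal_upperClosure,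
      monomialIdeal, image_singleton]
  rw [← hIci, monomialIdeal, image_union, Ideal.span_union]
  rfl

theorem monomialIdeal_eq_top {U : Set (σ →₀ ℕ)} (h : 0 ∈ U) : monomialIdeal K U = ⊤ :=
  Ideal.eq_top_of_isUnit_mem _ (Ideal.subset_span (mem_image_of_mem _ h)) (by simp [mono])

theorem IsUpperSet.mem_colon_monomialIdeal {U : Set (σ →₀ ℕ)} (hU : IsUpperSet U)
    {p : σ →₀ ℕ} {f : MvPolynomial σ K} :
    f ∈ (monomialIdeal K U).colon (Ideal.span {mono K p}) ↔ ∀ d ∈ f.support, p + d ∈ U := by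
  have hsupp : (f * monomial p 1).support = f.support.map (addRightEmbedding p) :=
    AddMonoidAlgebra.support_coeff_mul_single f 1 (by simp) p
  rw [Ideal.mem_colon_span_singleton, hU.mem_monomialIdeal, mono, hsupp]
  simp [add_comm]

theorem isPrime_span_X_image {R : Type*} [CommRing R] [IsDomain R] (T : Set σ) :
    (Ideal.span (X '' T : Set (MvPolynomial σ R))).IsPrime := by
  classical
  set I := Ideal.span (X '' T : Set (MvPolynomial σ R))
  let φ : MvPolynomial σ R →ₐ[R] MvPolynomial σ R := aeval fun i ↦ if i ∈ T then 0 else X i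
  -- `φ` kills the variables in `T` and is the identity modulo `I`
  have hφ : (Ideal.Quotient.mkₐ R I).comp φ = Ideal.Quotient.mkₐ R I := by
    ext i
    by_cases hi : i ∈ T
    · simpa [φ, hi, eq_comm (a := (0 : MvPolynomial σ R ⧸ I)), Ideal.Quotient.eq_zero_iff_mem]
        using (Ideal.subset_span (mem_image_of_mem X hi) : X i ∈ I)
    · simp [φ, hi]
  have hker : RingHom.ker φ = I := by
    refine le_antisymm (fun f hf ↦ ?_) (Ideal.span_le.mpr ?_)
    · rw [← Ideal.Quotient.eq_zero_iff_mem, ← Ideal.Quotient.mkₐ_eq_mk R, ← hφ]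
      simp [(RingHom.mem_ker).mp hf]
    · rintro _ ⟨i, hi, rfl⟩
      simp [φ, hi]
  rw [← hker]
  exact RingHom.ker_isPrime φ

theorem span_X_image_le_span_X_image_iff {R : Type*} [CommSemiring R] [Nontrivial R]
    {S T : Set σ} :
    Ideal.span (X '' S : Set (MvPolynomial σ R)) ≤ Ideal.span (X '' T) ↔ S ⊆ T := by
  refine ⟨fun h i hi ↦ ?_, fun h ↦ Ideal.span_mono (image_mono h)⟩
  have hXi := h (Ideal.subset_span ⟨i, hi, rfl⟩)
  rw [mem_ideal_span_X_image] at hXi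
  obtain ⟨j, hj, hij⟩ := hXi (Finsupp.single i 1) (by simp [support_X])
  rwa [Finsupp.single_apply_ne_zero.mp hij |>.1] at hj

/-- `{w | p + w ∈ U}` is the exponent set of the prime `(x_i : i ∈ T)`. -/
def IsPrimeColon (U : Set (σ →₀ ℕ)) (p : σ →₀ ℕ) (T : Finset σ) : Prop :=
  ∀ w, p + w ∈ U ↔ ∃ i ∈ T, w i ≠ 0

theorem IsUpperSet.colon_monomialIdeal_eq_span_X {U : Set (σ →₀ ℕ)} (hU : IsUpperSet U)
    {p : σ →₀ ℕ} {T : Finset σ} (h : IsPrimeColon U p T) :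
    (monomialIdeal K U).colon (Ideal.span {mono K p}) = Ideal.span (X '' (T : Set σ)) := by
  ext f
  rw [hU.mem_colon_monomialIdeal, mem_ideal_span_X_image]
  simp only [h _, Finset.mem_coe]

def HasAntitoneFiltration (J : Ideal (MvPolynomial σ K)) (k : ℕ) : Prop :=
  ∃ (r : ℕ) (c : Fin (r + 1) → Ideal (MvPolynomial σ K)) (u : Fin r → σ →₀ ℕ)
    (T : Fin r → Finset σ), IsPrimeFiltration J c u ∧
      (∀ j, filtFactor c u j = Ideal.span (X '' (T j : Set σ))) ∧
      Antitone (fun j ↦ (T j).card) ∧ ∀ j, (T j).card ≤ k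

theorem HasAntitoneFiltration.isPrettyClean {J : Ideal (MvPolynomial σ K)} {k : ℕ}
    (h : HasAntitoneFiltration J k) : IsPrettyClean J := by
  obtain ⟨r, c, u, T, hc, hfac, hanti, -⟩ := h
  refine ⟨r, c, u, hc, fun i j hij hle ↦ ?_⟩
  rw [hfac, hfac, span_X_image_le_span_X_image_iff, Finset.coe_subset] at hle
  rw [hfac, hfac, Finset.eq_of_subset_of_card_le hle (hanti hij.le)]

theorem HasAntitoneFiltration.of_zero_mem {U : Set (σ →₀ ℕ)} (h : 0 ∈ U) (k : ℕ) :
    HasAntitoneFiltration (monomialIdeal K U) k := by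
  rw [monomialIdeal_eq_top h]
  exact ⟨0, fun _ ↦ ⊤, Fin.elim0, Fin.elim0, ⟨rfl, rfl, fun j ↦ j.elim0, fun j ↦ j.elim0⟩,
    fun j ↦ j.elim0, fun i ↦ i.elim0, fun j ↦ j.elim0⟩

theorem HasAntitoneFiltration.cons {J : Ideal (MvPolynomial σ K)} {p : σ →₀ ℕ} {T : Finset σ}
    {k : ℕ}
    (hcolon : J.colon (Ideal.span {mono K p}) = Ideal.span (X '' (T : Set σ)))
    (hk : T.card ≤ k) (h : HasAntitoneFiltration (J ⊔ Ideal.span {mono K p}) T.card) :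
    HasAntitoneFiltration J k := by
  obtain ⟨r, c, u, Ts, ⟨hc0, hlast, hstep, -⟩, hfac, hanti, hle⟩ := h
  have hfac' : ∀ j, filtFactor (Fin.cons J c) (Fin.cons p u) j =
      Ideal.span (X '' ((Fin.cons T Ts : Fin (r + 1) → Finset σ) j : Set σ)) := by
    refine Fin.cases hcolon fun j ↦ ?_
    simpa [filtFactor, ← Fin.succ_castSucc] using hfac j
  refine ⟨r + 1, Fin.cons J c, Fin.cons p u, Fin.cons T Ts, ⟨rfl, ?_, ?_, ?_⟩, hfac', ?_, ?_⟩
  · simpa [← Fin.succ_last] using hlast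
  · refine Fin.cases (by simp [hc0]) fun j ↦ ?_
    simpa [← Fin.succ_castSucc] using hstep j
  · exact fun j ↦ (show (filtFactor (Fin.cons J c) (Fin.cons p u) j).IsPrime from
      hfac' j ▸ isPrime_span_X_image _)
  · intro i j hij
    induction j using Fin.cases with
    | zero => rw [Fin.le_zero_iff.mp hij]
    | succ j =>
      induction i using Fin.cases with
      | zero => simpa using hle j
      | succ i => simpa using hanti (Fin.succ_le_succ_iff.mp hij)
  · exact Fin.cases (by simpa using hk) fun j ↦ by simpa using (hle j).trans hk

theorem HasAntitoneFiltration.of_isPrimeColon {U : Set (σ →₀ ℕ)} (hU : IsUpperSet U)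
    {p : σ →₀ ℕ} {T : Finset σ} {k : ℕ} (hcolon : IsPrimeColon U p T) (hk : T.card ≤ k)
    (h : HasAntitoneFiltration (monomialIdeal K (U ∪ Ici p)) T.card) :
    HasAntitoneFiltration (monomialIdeal K U) k :=
  .cons (hU.colon_monomialIdeal_eq_span_X hcolon) hk
    (monomialIdeal_union_Ici (K := K) U p ▸ h)

theorem HasAntitoneFiltration.mono {J : Ideal (MvPolynomial σ K)} {k k' : ℕ}
    (h : HasAntitoneFiltration J k) (hk : k ≤ k') : HasAntitoneFiltration J k' :=
  let ⟨r, c, u, T, hc, hfac, hanti, hle⟩ := h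
  ⟨r, c, u, T, hc, hfac, hanti, fun j ↦ (hle j).trans hk⟩

theorem hasAntitoneFiltration_Ici [Finite σ] (g : σ →₀ ℕ) :
    HasAntitoneFiltration (monomialIdeal K (Ici g)) 1 := by
  induction g using WellFoundedLT.induction with
  | _ g ih =>
  rcases eq_or_ne g 0 with rfl | hg
  · exact .of_zero_mem self_mem_Ici 1
  obtain ⟨i, hi⟩ : ∃ i, g i ≠ 0 := by simpa [Finsupp.ext_iff] using hg
  obtain ⟨p, rfl⟩ : ∃ p, g = p + Finsupp.single i 1 :=
    ⟨_, (tsub_add_cancel_of_le (Finsupp.single_le_iff.mpr (Nat.one_le_iff_ne_zero.mpr hi))).symm⟩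
  have hp : p < p + Finsupp.single i 1 := lt_add_of_pos_right p
    (pos_iff_ne_zero.mpr (Finsupp.single_ne_zero.mpr one_ne_zero))
  refine .of_isPrimeColon (isUpperSet_Ici _) (p := p) (T := {i}) (fun w ↦ ?_) (by simp) ?_
  · simp [Finsupp.single_le_iff, Nat.one_le_iff_ne_zero]
  · rw [union_eq_right.mpr (Ici_subset_Ici.mpr hp.le)]
    simpa using ih p hp

/-- The monomial ideal `I` of `U` satisfies `I : 𝔪 = I`, `𝔪` the ideal of the variables. -/
def Saturated (U : Set (σ →₀ ℕ)) : Prop :=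
  ∀ q, (∀ i, q + Finsupp.single i 1 ∈ U) → q ∈ U

theorem Saturated.mem_of_forall_exists_add_single [Finite σ] {U : Set (σ →₀ ℕ)}
    (hU : IsUpperSet U) (hS : Saturated U) {q : σ →₀ ℕ}
    (h : ∀ i, ∃ k, q + Finsupp.single i k ∈ U) : q ∈ U := by
  classical
  choose k hk using h
  induction k using WellFoundedLT.induction generalizing q with
  | _ k ih =>
  by_cases hk0 : ∃ i, k i = 0
  · obtain ⟨i, hi⟩ := hk0
    simpa [hi] using hk i
  push Not at hk0
  refine hS q fun i ↦ ih (Function.update k i (k i - 1))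
    (update_lt_self_iff.mpr (by have := hk0 i; omega)) fun j ↦ ?_
  rcases eq_or_ne j i with rfl | hji
  · have hj : 1 + (k j - 1) = k j := by have := hk0 j; omega
    rw [Function.update_self, add_assoc, ← Finsupp.single_add, hj]
    exact hk j
  · rw [Function.update_of_ne hji]
    exact hU (add_le_add_left le_self_add _) (hk j)

theorem Saturated.exists_forall_add_single_notMem [Finite σ] {U : Set (σ →₀ ℕ)}
    (hU : IsUpperSet U) (hS : Saturated U) {q : σ →₀ ℕ} (hq : q ∉ U) :
    ∃ i, ∀ k, q + Finsupp.single i k ∉ U := by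
  by_contra! h
  exact hq (hS.mem_of_forall_exists_add_single hU h)

theorem hasAntitoneFiltration_of_forall_saturated [Fintype σ] {k : ℕ}
    (hk : k ≤ Fintype.card σ)
    (hsat : ∀ V : Set (σ →₀ ℕ), IsUpperSet V → Saturated V →
      HasAntitoneFiltration (monomialIdeal K V) k)
    {U : Set (σ →₀ ℕ)} (hU : IsUpperSet U) :
    HasAntitoneFiltration (monomialIdeal K U) (Fintype.card σ) := by
  induction U, hU using IsUpperSet.induction with
  | step U hU ih =>
  by_cases hS : Saturated U
  · exact (hsat U hU hS).mono hk
  obtain ⟨q, hq, hqU⟩ : ∃ q, (∀ i, q + Finsupp.single i 1 ∈ U) ∧ q ∉ U := by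
    simpa [Saturated] using hS
  refine .of_isPrimeColon hU (T := Finset.univ) (fun w ↦ ⟨fun hw ↦ ?_, fun ⟨i, _, hi⟩ ↦ ?_⟩)
    (by simp) (by simpa using ih q hqU)
  · by_contra! h0
    exact hqU (by simpa [show w = 0 by ext i; simpa using h0 i] using hw)
  · exact hU (add_le_add_right (Finsupp.single_le_iff.mpr (Nat.one_le_iff_ne_zero.mpr hi)) q)
      (hq i)

structure IsSaturatedUpper (R : ℕ → ℕ → ℕ → Prop) : Prop where
  mono : ∀ {a b c a' b' c'}, R a b c → a ≤ a' → b ≤ b' → c ≤ c' → R a' b' c'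
  sat : ∀ {a b c}, R (a + 1) b c → R a (b + 1) c → R a b (c + 1) → R a b c

section Frame

variable (e : Equiv.Perm (Fin 3)) {a b c a' b' c' : ℕ}

/-- The exponent vector with entries `a, b, c` at the variables `e 0, e 1, e 2`. -/
noncomputable def ofFrame (a b c : ℕ) : Fin 3 →₀ ℕ :=
  Finsupp.equivFunOnFinite.symm fun l ↦ ![a, b, c] (e.symm l)

@[simp] theorem ofFrame_apply_zero : ofFrame e a b c (e 0) = a := by simp [ofFrame]
@[simp] theorem ofFrame_apply_one : ofFrame e a b c (e 1) = b := by simp [ofFrame]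
@[simp] theorem ofFrame_apply_two : ofFrame e a b c (e 2) = c := by simp [ofFrame]

theorem forall_fin_three_iff {P : Fin 3 → Prop} : (∀ l, P l) ↔ P (e 0) ∧ P (e 1) ∧ P (e 2) := by
  refine ⟨fun h ↦ ⟨h _, h _, h _⟩, fun ⟨h0, h1, h2⟩ l ↦ ?_⟩
  obtain ⟨m, rfl⟩ := e.surjective l
  fin_cases m <;> assumption

variable {e}

theorem eq_ofFrame_iff {q : Fin 3 →₀ ℕ} :
    q = ofFrame e a b c ↔ q (e 0) = a ∧ q (e 1) = b ∧ q (e 2) = c := by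
  rw [Finsupp.ext_iff, forall_fin_three_iff e]
  simp

theorem ofFrame_le_ofFrame_iff :
    ofFrame e a b c ≤ ofFrame e a' b' c' ↔ a ≤ a' ∧ b ≤ b' ∧ c ≤ c' := by
  rw [Finsupp.le_def, forall_fin_three_iff e]
  simp

variable (e)

theorem ofFrame_eval (q : Fin 3 →₀ ℕ) : ofFrame e (q (e 0)) (q (e 1)) (q (e 2)) = q :=
  (eq_ofFrame_iff.mpr ⟨rfl, rfl, rfl⟩).symm

theorem ofFrame_add :
    ofFrame e a b c + ofFrame e a' b' c' = ofFrame e (a + a') (b + b') (c + c') :=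
  eq_ofFrame_iff.mpr (by simp)

theorem ofFrame_add_single_zero (k : ℕ) :
    ofFrame e a b c + Finsupp.single (e 0) k = ofFrame e (a + k) b c :=
  eq_ofFrame_iff.mpr (by simp)

theorem ofFrame_add_single_one (k : ℕ) :
    ofFrame e a b c + Finsupp.single (e 1) k = ofFrame e a (b + k) c :=
  eq_ofFrame_iff.mpr (by simp)

theorem ofFrame_add_single_two (k : ℕ) :
    ofFrame e a b c + Finsupp.single (e 2) k = ofFrame e a b (c + k) :=
  eq_ofFrame_iff.mpr (by simp)

theorem isSaturatedUpper_iff (U : Set (Fin 3 →₀ ℕ)) :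
    IsSaturatedUpper (fun a b c ↦ ofFrame e a b c ∈ U) ↔ IsUpperSet U ∧ Saturated U := by
  refine ⟨fun hR ↦ ⟨fun x y hxy hx ↦ ?_, fun q hq ↦ ?_⟩,
    fun ⟨hU, hS⟩ ↦ ⟨fun h ha hb hc ↦ ?_, fun ha hb hc ↦ ?_⟩⟩
  · rw [← ofFrame_eval e x] at hx
    rw [← ofFrame_eval e y]
    exact hR.mono hx (hxy _) (hxy _) (hxy _)
  · rw [forall_fin_three_iff e, ← ofFrame_eval e q, ofFrame_add_single_zero,
      ofFrame_add_single_one, ofFrame_add_single_two] at hq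
    rw [← ofFrame_eval e q]
    exact hR.sat hq.1 hq.2.1 hq.2.2
  · exact hU (ofFrame_le_ofFrame_iff.mpr ⟨ha, hb, hc⟩) h
  · refine hS _ ((forall_fin_three_iff e).mpr ?_)
    rw [ofFrame_add_single_zero, ofFrame_add_single_one, ofFrame_add_single_two]
    exact ⟨ha, hb, hc⟩

end Frame

theorem IsSaturatedUpper.ray {R : ℕ → ℕ → ℕ → Prop} (hR : IsSaturatedUpper R) {a b c : ℕ}
    (h : ¬ R a b c) :
    (∀ x, ¬ R (a + x) b c) ∨ (∀ y, ¬ R a (b + y) c) ∨ ∀ z, ¬ R a b (c + z) := by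
  -- any frame identifies `ℕ³` with `Fin 3 →₀ ℕ`
  have e : Equiv.Perm (Fin 3) := 1
  set U : Set (Fin 3 →₀ ℕ) := {q | R (q (e 0)) (q (e 1)) (q (e 2))}
  have hRU : ∀ a b c, ofFrame e a b c ∈ U ↔ R a b c := by simp [U]
  obtain ⟨hU, hS⟩ := (isSaturatedUpper_iff e U).mp (by simpa only [hRU] using hR)
  obtain ⟨i, hi⟩ := hS.exists_forall_add_single_notMem hU (q := ofFrame e a b c) (by simpa [hRU])
  obtain ⟨m, rfl⟩ := e.surjective i
  fin_cases m
  · exact .inl fun x ↦ by simpa [ofFrame_add_single_zero, hRU] using hi x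
  · exact .inr <| .inl fun y ↦ by simpa [ofFrame_add_single_one, hRU] using hi y
  · exact .inr <| .inr fun z ↦ by simpa [ofFrame_add_single_two, hRU] using hi z

namespace IsSaturatedUpper

variable {R : ℕ → ℕ → ℕ → Prop}

theorem swap (hR : IsSaturatedUpper R) : IsSaturatedUpper fun a b c ↦ R a c b :=
  ⟨fun h ha hb hc ↦ hR.mono h ha hc hb, fun ha hb hc ↦ hR.sat ha hc hb⟩

theorem mem_succ_snd (hR : IsSaturatedUpper R) {s b c : ℕ}
    (hmax : ∀ b' c', b ≤ b' → c ≤ c' → (∀ x, ¬ R x b' c') → b' = b ∧ c' = c)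
    (hcol : ∃ z, R s b z) (hrow : ∃ y, R s y c) : R s (b + 1) c := by
  by_contra h
  rcases hR.ray h with hx | hy | hz
  · have := hmax (b + 1) c (by omega) le_rfl fun x hx' ↦
      hx x (hR.mono hx' (by omega) le_rfl le_rfl)
    omega
  · obtain ⟨y, hy'⟩ := hrow
    exact hy y (hR.mono hy' le_rfl (by omega) le_rfl)
  · obtain ⟨z, hz'⟩ := hcol
    exact hz z (hR.mono hz' le_rfl (by omega) (by omega))

theorem mem_succ_thd (hR : IsSaturatedUpper R) {s b c : ℕ}
    (hmax : ∀ b' c', b ≤ b' → c ≤ c' → (∀ x, ¬ R x b' c') → b' = b ∧ c' = c)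
    (hcol : ∃ z, R s b z) (hrow : ∃ y, R s y c) : R s b (c + 1) :=
  hR.swap.mem_succ_snd (fun c' b' hc hb hl ↦ (hmax b' c' hb hc hl).symm) hrow hcol

theorem sup_orthant (hR : IsSaturatedUpper R) {s b c : ℕ}
    (hmax : ∀ b' c', b ≤ b' → c ≤ c' → (∀ x, ¬ R x b' c') → b' = b ∧ c' = c)
    (hcol : ∃ z, R s b z) (hrow : ∃ y, R s y c)
    (hmin : ∀ x < s, (∃ z, R x b z) → (∃ y, R x y c) → False) :
    IsSaturatedUpper fun x y z ↦ R x y z ∨ (s ≤ x ∧ b ≤ y ∧ c ≤ z) := by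
  refine ⟨fun h ha hb hc ↦ h.imp (hR.mono · ha hb hc) fun h ↦ by omega,
    fun {x y z} hx hy hz ↦ ?_⟩
  by_cases hO : s ≤ x ∧ b ≤ y ∧ c ≤ z
  · exact .inr hO
  -- some ray from `(x, y, z)` misses `R`, so the successor on it lies in the orthant
  refine .inl (by_contra fun hv ↦ ?_)
  rcases hR.ray hv with hx' | hy' | hz'
  · obtain ⟨hsx, hby, hcz⟩ := hx.resolve_left (hx' 1)
    obtain ⟨rfl, rfl⟩ := hmax y z hby hcz fun t ht ↦ hx' t (hR.mono ht (by omega) le_rfl le_rfl)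
    exact hmin x (by omega) ⟨z + 1, hz.resolve_right (by omega)⟩
      ⟨y + 1, hy.resolve_right (by omega)⟩
  · obtain ⟨hsx, hby, hcz⟩ := hy.resolve_left (hy' 1)
    obtain ⟨t, ht⟩ := hrow
    exact hy' t (hR.mono ht hsx (by omega) hcz)
  · obtain ⟨hsx, hby, hcz⟩ := hz.resolve_left (hz' 1)
    obtain ⟨t, ht⟩ := hcol
    exact hz' t (hR.mono ht hsx hby (by omega))

theorem exists_maximal_empty_line (hR : IsSaturatedUpper R) {a₁ a₂ b₀ b₁ c₀ c₁ : ℕ}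
    (h₁ : R a₁ b₀ c₁) (h₂ : R a₂ b₁ c₀) (hline : ∀ x, ¬ R x b₀ c₀) :
    ∃ b c, b₀ ≤ b ∧ c₀ ≤ c ∧ (∀ x, ¬ R x b c) ∧
      ∀ b' c', b ≤ b' → c ≤ c' → (∀ x, ¬ R x b' c') → b' = b ∧ c' = c := by
  set L := {bc : ℕ × ℕ | (b₀, c₀) ≤ bc ∧ ∀ x, ¬ R x bc.1 bc.2}
  have hL : L.Finite := by
    refine ((finite_Iio b₁).prod (finite_Iio c₁)).subset fun ⟨b, c⟩ ⟨⟨hb, hc⟩, hl⟩ ↦ ?_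
    simp only [mem_prod, mem_Iio]
    by_contra! h
    by_cases hb₁ : b₁ ≤ b
    · exact hl a₂ (hR.mono h₂ le_rfl hb₁ hc)
    · exact hl a₁ (hR.mono h₁ le_rfl hb (h (by omega)))
  obtain ⟨⟨b, c⟩, ⟨⟨hb, hc⟩, hbc⟩, hmax⟩ := hL.exists_maximal ⟨(b₀, c₀), le_rfl, hline⟩
  refine ⟨b, c, hb, hc, hbc, fun b' c' hb' hc' hl ↦ ?_⟩
  have := hmax (y := (b', c')) ⟨⟨hb.trans hb', hc.trans hc'⟩, hl⟩ ⟨hb', hc'⟩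
  simp only [Prod.mk_le_mk] at this
  omega

theorem exists_corner (hR : IsSaturatedUpper R) {a₁ a₂ b₀ b₁ c₀ c₁ : ℕ} (h₁ : R a₁ b₀ c₁)
    (h₂ : R a₂ b₁ c₀) (hline : ∀ x, ¬ R x b₀ c₀) :
    ∃ s b c, (∀ x y z, R (s + x) (b + y) (c + z) ↔ y ≠ 0 ∨ z ≠ 0) ∧
      IsSaturatedUpper fun x y z ↦ R x y z ∨ (s ≤ x ∧ b ≤ y ∧ c ≤ z) := by
  classical
  obtain ⟨b, c, hb, hc, hbc, hmax⟩ := hR.exists_maximal_empty_line h₁ h₂ hline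
  -- the corner sits at the first `x` over which both the `z`-column at `(x, b)` and the
  -- `y`-row at `(x, c)` meet `R`
  have hex : ∃ x, (∃ z, R x b z) ∧ ∃ y, R x y c :=
    ⟨max a₁ a₂, ⟨c₁, hR.mono h₁ (le_max_left _ _) hb le_rfl⟩,
      ⟨b₁, hR.mono h₂ (le_max_right _ _) le_rfl hc⟩⟩
  obtain ⟨hcol, hrow⟩ := Nat.find_spec hex
  have hsnd := hR.mem_succ_snd hmax hcol hrow
  have hthd := hR.mem_succ_thd hmax hcol hrow
  refine ⟨Nat.find hex, b, c, fun x y z ↦ ⟨fun h ↦ ?_, fun h ↦ ?_⟩,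
    hR.sup_orthant hmax hcol hrow fun x hx hz hy ↦ Nat.find_min hex hx ⟨hz, hy⟩⟩
  · by_contra! h0
    exact hbc _ (by simpa [h0] using h)
  · rcases h with hy | hz
    · exact hR.mono hsnd (by omega) (by omega) (by omega)
    · exact hR.mono hthd (by omega) (by omega) (by omega)

end IsSaturatedUpper

theorem exists_componentwise_min [Finite σ] {U : Set (σ →₀ ℕ)} (hU : U.Nonempty) :
    ∃ g, (∀ a ∈ U, g ≤ a) ∧ ∀ i, ∃ a ∈ U, a i = g i := by
  refine ⟨Finsupp.equivFunOnFinite.symm fun i ↦ sInf ((· i) '' U), fun a ha i ↦ ?_, fun i ↦ ?_⟩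
  · simpa using Nat.sInf_le (mem_image_of_mem (· i) ha)
  · simpa using Nat.sInf_mem (hU.image (· i))

theorem Saturated.exists_corner {U : Set (Fin 3 →₀ ℕ)} (hU : IsUpperSet U) (hS : Saturated U)
    {g : Fin 3 →₀ ℕ} (hmin : ∀ i, ∃ a ∈ U, a i = g i) (hgU : g ∉ U) :
    ∃ p T, T.card = 2 ∧ IsPrimeColon U p T ∧ Saturated (U ∪ Ici p) := by
  obtain ⟨i, hi⟩ := hS.exists_forall_add_single_notMem hU hgU
  set e := Equiv.swap 0 i
  have hR := (isSaturatedUpper_iff e U).mpr ⟨hU, hS⟩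
  have hline : ∀ x, ofFrame e x (g (e 1)) (g (e 2)) ∉ U := fun x hx ↦ hi x <| by
    rw [← Equiv.swap_apply_left 0 i, ← ofFrame_eval e g, ofFrame_add_single_zero]
    exact hU (ofFrame_le_ofFrame_iff.mpr ⟨by omega, le_rfl, le_rfl⟩) hx
  obtain ⟨a₁, ha₁, h₁⟩ := hmin (e 1)
  obtain ⟨a₂, ha₂, h₂⟩ := hmin (e 2)
  obtain ⟨s, b, c, hcorner, hsat⟩ := hR.exists_corner (a₁ := a₁ (e 0)) (c₁ := a₁ (e 2))
    (a₂ := a₂ (e 0)) (b₁ := a₂ (e 1)) (by rwa [← h₁, ofFrame_eval])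
    (by rwa [← h₂, ofFrame_eval]) hline
  refine ⟨ofFrame e s b c, {e 1, e 2}, Finset.card_pair (by simp), fun w ↦ ?_, ?_⟩
  · rw [← ofFrame_eval e w, ofFrame_add]
    simpa using hcorner _ _ _
  · refine ((isSaturatedUpper_iff e _).mp ?_).2
    simpa [ofFrame_le_ofFrame_iff] using hsat

theorem Saturated.inf_mem_of_le_two {n : ℕ} (hn : n ≤ 2) {U : Set (Fin n →₀ ℕ)}
    (hU : IsUpperSet U) (hS : Saturated U) (hne : U.Nonempty) {g : Fin n →₀ ℕ}
    (hg : ∀ a ∈ U, g ≤ a) (hmin : ∀ i, ∃ a ∈ U, a i = g i) : g ∈ U := by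
  by_contra hgU
  obtain ⟨i, hi⟩ := hS.exists_forall_add_single_notMem hU hgU
  obtain ⟨a, ha, hai⟩ : ∃ a ∈ U, ∀ j ≠ i, a j = g j := by
    by_cases h : ∃ j, j ≠ i
    · obtain ⟨j, hj⟩ := h
      obtain ⟨a, ha, haj⟩ := hmin j
      exact ⟨a, ha, fun l hl ↦ by rwa [show l = j by omega]⟩
    · obtain ⟨a, ha⟩ := hne
      exact ⟨a, ha, fun j hj ↦ (h ⟨j, hj⟩).elim⟩
  refine hi (a i - g i) ?_
  convert ha using 1
  ext j
  rcases eq_or_ne j i with rfl | hj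
  · have := hg a ha j
    simp only [Finsupp.add_apply, Finsupp.single_eq_same]
    omega
  · simp [hai j hj, hj.symm]

theorem Saturated.eq_Ici_or_exists_corner {n : ℕ} (hn : n ≤ 3) {U : Set (Fin n →₀ ℕ)}
    (hU : IsUpperSet U) (hS : Saturated U) (hne : U.Nonempty) :
    (∃ g, U = Ici g) ∨
      ∃ p T, T.card = 2 ∧ IsPrimeColon U p T ∧ Saturated (U ∪ Ici p) := by
  obtain ⟨g, hg, hmin⟩ := exists_componentwise_min hne
  by_cases hgU : g ∈ U
  · exact .inl ⟨g, Subset.antisymm hg fun a ha ↦ hU ha hgU⟩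
  obtain rfl | hn : n = 3 ∨ n ≤ 2 := by omega
  · exact .inr (hS.exists_corner hU hmin hgU)
  · exact absurd (hS.inf_mem_of_le_two hn hU hne hg hmin) hgU

theorem Saturated.hasAntitoneFiltration_of_le_three {n : ℕ} (hn : n ≤ 3)
    {U : Set (Fin n →₀ ℕ)} (hU : IsUpperSet U) (hS : Saturated U) :
    HasAntitoneFiltration (monomialIdeal K U) (min 2 n) := by
  induction U, hU using IsUpperSet.induction with
  | step U hU ih =>
  rcases U.eq_empty_or_nonempty with rfl | hne
  · exact .of_isPrimeColon hU (p := 0) (T := ∅) (by simp [IsPrimeColon]) (Nat.zero_le _)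
      (.of_zero_mem (by simp) _)
  rcases hS.eq_Ici_or_exists_corner hn hU hne with ⟨g, rfl⟩ | ⟨p, T, hT, hcolon, hS'⟩
  · rcases eq_or_ne g 0 with rfl | hg
    · exact .of_zero_mem self_mem_Ici _
    · refine (hasAntitoneFiltration_Ici g).mono ?_
      have : n ≠ 0 := by
        rintro rfl
        exact hg (Subsingleton.elim _ _)
      omega
  · have h2 : min 2 n = 2 := by
      have := T.card_le_univ
      rw [hT, Fintype.card_fin] at this
      omega
    have hp : p ∉ U := fun h ↦ by simpa using (hcolon 0).mp (by rwa [add_zero])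
    rw [h2] at ih ⊢
    exact .of_isPrimeColon hU hcolon hT.le (hT ▸ ih p hp hS')

end MonomialIdeals

/-- Every monomial ideal in a polynomial ring in at most three
variables over a field is pretty clean. -/
theorem prettyClean_of_le_three_variables
    {K : Type*} [Field K] {n : ℕ} (hn : n ≤ 3)
    (I : Ideal (MvPolynomial (Fin n) K)) (hI : IsMonomialIdeal I) :
    IsPrettyClean I := by
  obtain ⟨A, rfl⟩ := hI
  show IsPrettyClean (monomialIdeal K A)
  rw [← monomialIdeal_upperClosure]
  refine (hasAntitoneFiltration_of_forall_saturated (k := min 2 n) (by simp)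
    (fun V hV hS ↦ hS.hasAntitoneFiltration_of_le_three hn hV)
    (upperClosure A).upper).isPrettyClean
end

section
/- Let I be a monomial ideal in S = K[x_1,…,x_n] and let u be a monomial with u ∈ Ĩ \ I, where Ĩ is the saturation of I. Then in every Stanley decomposition S/I = ⊕_{i=1}^r u_iK[Z_i] there is an index i with u_i = u and Z_i = ∅; that is, the 0-dimensional Stanley space uK occurs in every Stanley decomposition of S/I. -/
/-!
If `x^a ∈ Ĩ` then `x^a x_j^k ∈ I` for some `k` and all `j`. Since `I` is a monomial ideal and
`x^a ∉ I`, comparing coefficients at `a` shows that writing the class of `x^a` in the basis of a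
Stanley decomposition forces `x^a = x^{u_i} x^v` for some basis monomial, `supp v ⊆ Z_i`. If
`Z_i` contained some `x_j`, the basis monomial `x^a x_j^k` would be zero in `S/I`; so `Z_i = ∅`,
hence `v = 0` and `u_i = a`.
-/

open MvPolynomial

/-- The graded maximal ideal `m = (x_i : i ∈ σ)`. -/
noncomputable def maxIdeal (K : Type*) [Field K] (σ : Type*) :
    Ideal (MvPolynomial σ K) :=
  Ideal.span (Set.range (X : σ → MvPolynomial σ K))

/-- The saturation `Ĩ = I : m^∞ = ⋃ₖ (I : mᵏ)`. -/
noncomputable def saturation {K : Type*} [Field K] {σ : Type*}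
    (I : Ideal (MvPolynomial σ K)) : Ideal (MvPolynomial σ K) :=
  ⨆ k : ℕ, I.colon ((maxIdeal K σ ^ k : Ideal (MvPolynomial σ K)) : Set (MvPolynomial σ K))

/-- The height of an ideal: the infimum of heights of primes minimal over it. -/
noncomputable def idealHeight {R : Type*} [CommRing R] (I : Ideal R) : ℕ∞ :=
  ⨅ P : {P : Ideal R // P ∈ I.minimalPrimes},
    Order.height (⟨P.1, P.2.1.1⟩ : PrimeSpectrum R)

/-- The family of residue classes of the monomials `x^{u i}·x^v`, `supp v ⊆ Z i`,
of a candidate Stanley decomposition `S/I = ⊕ᵢ x^{u i} K[Z i]`. -/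
noncomputable def stanleyFamily {K : Type*} [Field K] {n : ℕ}
    (I : Ideal (MvPolynomial (Fin n) K)) {r : ℕ}
    (u : Fin r → (Fin n →₀ ℕ)) (Z : Fin r → Finset (Fin n)) :
    (Σ i : Fin r, {v : Fin n →₀ ℕ // v.support ⊆ Z i}) →
      (MvPolynomial (Fin n) K ⧸ I) :=
  fun p => Ideal.Quotient.mk I (mono K (u p.1 + p.2.1))

/-- `S/I = ⊕ᵢ x^{u i} K[Z i]` is a Stanley decomposition: the residue classes of
the monomials `x^{u i}·x^v` (`supp v ⊆ Z i`) form a `K`-basis of `S/I`. -/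
def IsStanleyDecomposition {K : Type*} [Field K] {n : ℕ}
    (I : Ideal (MvPolynomial (Fin n) K)) {r : ℕ}
    (u : Fin r → (Fin n →₀ ℕ)) (Z : Fin r → Finset (Fin n)) : Prop :=
  LinearIndependent K (stanleyFamily I u Z) ∧
    Submodule.span K (Set.range (stanleyFamily I u Z)) = ⊤

section

variable {K : Type*} [Field K] {σ : Type*}

lemma mono_mul_X_pow (a : σ →₀ ℕ) (j : σ) (k : ℕ) :
    mono K a * X j ^ k = mono K (a + Finsupp.single j k) := by
  rw [mono, mono, X_pow_eq_monomial, monomial_mul, one_mul]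

lemma coeff_mono_self (a : σ →₀ ℕ) : coeff a (mono K a) = 1 := by
  classical
  rw [mono, coeff_monomial, if_pos rfl]

lemma coeff_eq_zero_of_mem_span_mono {M : Set (σ →₀ ℕ)} {f : MvPolynomial σ K}
    (hf : f ∈ Submodule.span K (mono K '' M)) {a : σ →₀ ℕ} (ha : a ∉ M) : coeff a f = 0 := by
  classical
  induction hf using Submodule.span_induction with
  | mem g hg =>
    obtain ⟨m, hm, rfl⟩ := hg
    rw [mono, coeff_monomial, if_neg (ne_of_mem_of_not_mem hm ha)]
  | zero => exact coeff_zero a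
  | add f g _ _ hf hg => rw [coeff_add, hf, hg, add_zero]
  | smul c f _ hf => rw [coeff_smul, hf, smul_zero]

lemma IsMonomialIdeal.mono_mem_of_mem_support {I : Ideal (MvPolynomial σ K)}
    (hI : IsMonomialIdeal I) {f : MvPolynomial σ K} (hf : f ∈ I) {b : σ →₀ ℕ}
    (hb : b ∈ f.support) : mono K b ∈ I := by
  classical
  obtain ⟨A, rfl⟩ := hI
  simp only [mono, mem_ideal_span_monomial_image] at hf ⊢
  intro c hc
  rw [support_monomial, if_neg one_ne_zero, Finset.mem_singleton] at hc
  exact hc ▸ hf b hb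

/-- For a monomial ideal, the coefficient of a monomial outside `I` vanishes on `I`, so it is
well defined on `S/I`. -/
lemma IsMonomialIdeal.mem_of_mk_mono_mem_span {I : Ideal (MvPolynomial σ K)}
    (hI : IsMonomialIdeal I) {a : σ →₀ ℕ} (ha : mono K a ∉ I) {M : Set (σ →₀ ℕ)}
    (hspan : Ideal.Quotient.mk I (mono K a) ∈
      Submodule.span K ((fun m => Ideal.Quotient.mk I (mono K m)) '' M)) : a ∈ M := by
  by_contra haM
  have himage : (fun m => Ideal.Quotient.mk I (mono K m)) '' M =
      (Ideal.Quotient.mkₐ K I).toLinearMap '' (mono K '' M) := by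
    rw [Set.image_image]; rfl
  rw [himage, Submodule.span_image] at hspan
  obtain ⟨f, hf, hfa⟩ := Submodule.mem_map.mp hspan
  have hdiff : mono K a - f ∈ I := Ideal.Quotient.eq.mp hfa.symm
  have hcoeff : coeff a (mono K a - f) = 1 := by
    rw [coeff_sub, coeff_mono_self, coeff_eq_zero_of_mem_span_mono hf haM, sub_zero]
  exact ha (hI.mono_mem_of_mem_support hdiff (by simp [hcoeff]))

lemma exists_mono_add_single_mem_of_mem_saturation {I : Ideal (MvPolynomial σ K)}
    {a : σ →₀ ℕ} (ha : mono K a ∈ saturation I) :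
    ∃ k : ℕ, ∀ j : σ, mono K (a + Finsupp.single j k) ∈ I := by
  have hmono : Monotone fun k : ℕ =>
      I.colon ((maxIdeal K σ ^ k : Ideal (MvPolynomial σ K)) : Set (MvPolynomial σ K)) :=
    fun _ _ hkl =>
      Submodule.colon_mono le_rfl (SetLike.coe_subset_coe.mpr (Ideal.pow_le_pow_right hkl))
  obtain ⟨k, hk⟩ := (Submodule.mem_iSup_of_directed _ hmono.directed_le).mp ha
  refine ⟨k, fun j => ?_⟩
  have hXk : X j ^ k ∈ maxIdeal K σ ^ k :=
    Ideal.pow_mem_pow (Ideal.subset_span (Set.mem_range_self j)) k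
  simpa only [smul_eq_mul, mono_mul_X_pow] using Submodule.mem_colon.mp hk _ hXk

end

section

variable {K : Type*} [Field K] {n : ℕ} {I : Ideal (MvPolynomial (Fin n) K)} {r : ℕ}
  {u : Fin r → (Fin n →₀ ℕ)} {Z : Fin r → Finset (Fin n)}

lemma range_stanleyFamily :
    Set.range (stanleyFamily I u Z) = (fun m => Ideal.Quotient.mk I (mono K m)) ''
      Set.range (fun p : Σ i : Fin r, {v : Fin n →₀ ℕ // v.support ⊆ Z i} => u p.1 + p.2.1) := by
  rw [← Set.range_comp]; rfl

lemma mono_notMem_of_linearIndependent_stanleyFamily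
    (hLI : LinearIndependent K (stanleyFamily I u Z)) {i : Fin r} {w : Fin n →₀ ℕ}
    (hw : w.support ⊆ Z i) : mono K (u i + w) ∉ I :=
  fun h => hLI.ne_zero (⟨i, ⟨w, hw⟩⟩ : Σ i : Fin r, {v : Fin n →₀ ℕ // v.support ⊆ Z i})
    (Ideal.Quotient.eq_zero_iff_mem.mpr h)

lemma eq_empty_of_linearIndependent_stanleyFamily
    (hLI : LinearIndependent K (stanleyFamily I u Z)) {i : Fin r} {v : Fin n →₀ ℕ}
    (hv : v.support ⊆ Z i) {k : ℕ} (hk : ∀ j, mono K (u i + v + Finsupp.single j k) ∈ I) :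
    Z i = ∅ := by
  classical
  by_contra hne
  -- for `j ∈ Z i`, the member `x^{u i + v} x_j^k` of the family would vanish in `S/I`
  obtain ⟨j, hj⟩ := Finset.nonempty_iff_ne_empty.mpr hne
  have hsupp : (v + Finsupp.single j k).support ⊆ Z i :=
    Finsupp.support_add.trans (Finset.union_subset hv
      (Finsupp.support_single_subset.trans (Finset.singleton_subset_iff.mpr hj)))
  exact mono_notMem_of_linearIndependent_stanleyFamily hLI hsupp (add_assoc (u i) v _ ▸ hk j)

end

/-- If `u = x^a` is a monomial in `Ĩ \ I`, then the
`0`-dimensional Stanley space `uK` occurs in every Stanley decomposition of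
`S/I`: there is an index `i` with `u_i = u` and `Z_i = ∅`. -/
theorem saturation_monomial_mem_every_stanley_decomposition
    {K : Type*} [Field K] {n : ℕ} (I : Ideal (MvPolynomial (Fin n) K))
    (hI : IsMonomialIdeal I) (a : Fin n →₀ ℕ)
    (hmem : mono K a ∈ saturation I) (hnmem : mono K a ∉ I)
    {r : ℕ} (u : Fin r → (Fin n →₀ ℕ)) (Z : Fin r → Finset (Fin n))
    (hD : IsStanleyDecomposition I u Z) :
    ∃ i : Fin r, u i = a ∧ Z i = ∅ := by
  obtain ⟨k, hk⟩ := exists_mono_add_single_mem_of_mem_saturation hmem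
  obtain ⟨⟨i, v, hv⟩, rfl⟩ := hI.mem_of_mk_mono_mem_span hnmem
    (by rw [← range_stanleyFamily, hD.2]; exact Submodule.mem_top)
  have hZ : Z i = ∅ := eq_empty_of_linearIndependent_stanleyFamily hD.1 hv hk
  have hv0 : v = 0 := Finsupp.support_eq_empty.mp (Finset.subset_empty.mp (hZ ▸ hv))
  exact ⟨i, by simp [hv0], hZ⟩
end

section
/- Let I = (u_1,…,u_m) be a monomial ideal in S = K[x_1,…,x_n] and u a monomial of S; let I^p and u^p be their polarizations in T. If I^p : u^p is a prime ideal, then I^p : u^p = (x_{i_1 j_1},…,x_{i_k j_k}) for variables x_{i_r j_r} of T with i_r ≠ i_s whenever r ≠ s. -/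
open MvPolynomial

/-- The exponent vector of the polarization `u^p = ∏ᵢ ∏_{j<aᵢ} x_{ij}` of the
monomial `u = ∏ᵢ xᵢ^{aᵢ}`: the squarefree exponent supported on
`{(i,j) : j < a i}`, in the variables of `T = K[x_{ij}]`. -/
noncomputable def polarExp {n : ℕ} (a : Fin n →₀ ℕ) : (Fin n × ℕ) →₀ ℕ :=
  Finsupp.indicator
    (a.support.biUnion fun i => (Finset.range (a i)).image fun j => (i, j))
    (fun _ _ => 1)

/-- The polarization `I^p ⊂ T = K[x_{ij}]` of a monomial ideal `I ⊂ S`: the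
ideal generated by the polarizations of the monomials of `I` (for a monomial
ideal this is the ideal generated by the polarizations of any set of monomial
generators). -/
noncomputable def polarIdeal {K : Type*} [Field K] {n : ℕ}
    (I : Ideal (MvPolynomial (Fin n) K)) : Ideal (MvPolynomial (Fin n × ℕ) K) :=
  Ideal.span ((fun a => mono K (polarExp a)) '' {a : Fin n →₀ ℕ | mono K a ∈ I})

/-!
The colon ideal `I^p : u^p` is again a monomial ideal, so when it is prime it is generated by the
variables it contains. A variable `x_{ij}` with `j ≠ aᵢ` (where `u = xᵃ`) cannot lie in it: if
`x_{ij} u^p` is divisible by `w^p` for a monomial `w = xᵇ ∈ I`, then comparing at the positions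
`(i', a_{i'})` forces `b ≤ a`, so `u^p` itself lies in `I^p` and the colon is the unit ideal.
Hence the generators are among the `x_{i aᵢ}`, whose first indices are pairwise distinct.
-/

section MonomialIdeal

variable {σ R : Type*} [CommSemiring R]

theorem MvPolynomial.support_mul_monomial_one (p : MvPolynomial σ R) (e : σ →₀ ℕ) :
    (p * monomial e 1).support = p.support.map (addRightEmbedding e) :=
  AddMonoidAlgebra.support_coeff_mul_single p 1 (by simp) e

theorem MvPolynomial.mem_span_monomial_colon_iff {s : Set (σ →₀ ℕ)} {e : σ →₀ ℕ}
    {f : MvPolynomial σ R} :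
    f ∈ (Ideal.span ((fun d => monomial d (1 : R)) '' s)).colon
        (Ideal.span {monomial e (1 : R)}) ↔
      ∀ c ∈ f.support, ∃ d ∈ s, d ≤ c + e := by
  rw [Ideal.mem_colon_span_singleton, mem_ideal_span_monomial_image, support_mul_monomial_one]
  simp

theorem Ideal.IsPrime.eq_span_X_of_monomial_mem {J : Ideal (MvPolynomial σ R)} (hJ : J.IsPrime)
    (hmono : ∀ f ∈ J, ∀ c ∈ f.support, monomial c 1 ∈ J) :
    J = Ideal.span (X '' {v | X v ∈ J}) := by
  refine le_antisymm (fun f hf => mem_ideal_span_X_image.mpr fun c hc => ?_) ?_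
  · have hcJ := hmono f hf c hc
    rw [monomial_eq, C_1, one_mul, Finsupp.prod, Ideal.IsPrime.prod_mem_iff (hp := hJ)] at hcJ
    obtain ⟨v, hv, hvJ⟩ := hcJ
    exact ⟨v, hJ.mem_of_pow_mem _ hvJ, Finsupp.mem_support_iff.mp hv⟩
  · rw [Ideal.span_le]
    rintro _ ⟨v, hv, rfl⟩
    exact hv

end MonomialIdeal

theorem exists_fin_enum_of_forall_snd_eq {ι α : Type*} [Finite ι] {S : Set (ι × α)} (f : ι → α)
    (hS : ∀ v ∈ S, v.2 = f v.1) :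
    ∃ (k : ℕ) (p : Fin k → ι × α), Function.Injective (fun r => (p r).1) ∧ Set.range p = S := by
  have hfin : S.Finite :=
    (Set.finite_range fun i => (i, f i)).subset fun v hv => ⟨v.1, Prod.ext rfl (hS v hv).symm⟩
  obtain ⟨k, p, hp⟩ := hfin.fin_embedding
  refine ⟨k, p, fun r s hrs => p.injective (Prod.ext hrs ?_), hp⟩
  have hr : p r ∈ S := hp ▸ Set.mem_range_self r
  have hs : p s ∈ S := hp ▸ Set.mem_range_self s
  rw [hS _ hr, hS _ hs]
  exact congrArg f hrs

section Polarization

variable {K : Type*} [Field K] {n : ℕ}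

theorem polarExp_apply (a : Fin n →₀ ℕ) (v : Fin n × ℕ) :
    polarExp a v = if v.2 < a v.1 then 1 else 0 := by
  obtain ⟨i, j⟩ := v
  simp only [polarExp, Finsupp.indicator_apply]
  grind

theorem polarExp_mono {a b : Fin n →₀ ℕ} (h : b ≤ a) : polarExp b ≤ polarExp a := fun v => by
  have := h v.1
  simp only [polarExp_apply]
  split_ifs <;> omega

theorem le_of_polarExp_le_single_add {a b : Fin n →₀ ℕ} {i : Fin n} {j : ℕ} (hj : j ≠ a i)
    (h : polarExp b ≤ Finsupp.single (i, j) 1 + polarExp a) : b ≤ a := fun i' => by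
  have hi' := h (i', a i')
  rw [Finsupp.add_apply, Finsupp.single_eq_of_ne (by grind), polarExp_apply, polarExp_apply]
    at hi'
  simp only [lt_self_iff_false, if_false] at hi'
  split_ifs at hi' with hlt <;> omega

theorem polarIdeal_eq_span_monomial (I : Ideal (MvPolynomial (Fin n) K)) :
    polarIdeal I =
      Ideal.span ((fun d => monomial d (1 : K)) '' (polarExp '' {a | mono K a ∈ I})) := by
  rw [polarIdeal, Set.image_image]
  rfl

theorem mem_polarIdeal_colon_iff {I : Ideal (MvPolynomial (Fin n) K)} {a : Fin n →₀ ℕ}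
    {f : MvPolynomial (Fin n × ℕ) K} :
    f ∈ (polarIdeal I).colon (Ideal.span {mono K (polarExp a)}) ↔
      ∀ c ∈ f.support, ∃ b, mono K b ∈ I ∧ polarExp b ≤ c + polarExp a := by
  rw [polarIdeal_eq_span_monomial, mono, mem_span_monomial_colon_iff]
  simp

theorem monomial_mem_polarIdeal_colon {I : Ideal (MvPolynomial (Fin n) K)} {a : Fin n →₀ ℕ}
    {f : MvPolynomial (Fin n × ℕ) K}
    (hf : f ∈ (polarIdeal I).colon (Ideal.span {mono K (polarExp a)}))
    {c : Fin n × ℕ →₀ ℕ} (hc : c ∈ f.support) :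
    monomial c 1 ∈ (polarIdeal I).colon (Ideal.span {mono K (polarExp a)}) := by
  rw [mem_polarIdeal_colon_iff] at hf ⊢
  intro c' hc'
  rw [Finset.mem_singleton.mp (support_monomial_subset hc')]
  exact hf c hc

theorem eq_of_X_mem_polarIdeal_colon {I : Ideal (MvPolynomial (Fin n) K)} {a : Fin n →₀ ℕ}
    (hne : (polarIdeal I).colon (Ideal.span {mono K (polarExp a)}) ≠ ⊤) {i : Fin n} {j : ℕ}
    (hX : X (i, j) ∈ (polarIdeal I).colon (Ideal.span {mono K (polarExp a)})) : j = a i := by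
  by_contra hj
  rw [X, mem_polarIdeal_colon_iff] at hX
  obtain ⟨b, hb, hle⟩ := hX (Finsupp.single (i, j) 1) (by simp)
  refine hne ((Ideal.eq_top_iff_one _).mpr (mem_polarIdeal_colon_iff.mpr fun c hc => ?_))
  obtain rfl : c = 0 := by simpa using hc
  rw [zero_add]
  exact ⟨b, hb, polarExp_mono (le_of_polarExp_le_single_add hj hle)⟩

end Polarization

theorem polarization_colon_prime_generated_by_variables_general
    {K : Type*} [Field K] {n : ℕ} (I : Ideal (MvPolynomial (Fin n) K))
    (a : Fin n →₀ ℕ)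
    (hp : ((polarIdeal I).colon (Ideal.span {mono K (polarExp a)})).IsPrime) :
    ∃ (k : ℕ) (p : Fin k → Fin n × ℕ),
      Function.Injective (fun r => (p r).1) ∧
      (polarIdeal I).colon (Ideal.span {mono K (polarExp a)}) =
        Ideal.span (Set.range fun r => (X (p r) : MvPolynomial (Fin n × ℕ) K)) := by
  set P := (polarIdeal I).colon (Ideal.span {mono K (polarExp a)})
  obtain ⟨k, p, hinj, hrange⟩ := exists_fin_enum_of_forall_snd_eq (S := {v | X v ∈ P}) a
    fun _ hv => eq_of_X_mem_polarIdeal_colon hp.ne_top hv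
  refine ⟨k, p, hinj, ?_⟩
  rw [hp.eq_span_X_of_monomial_mem fun f hf c hc => monomial_mem_polarIdeal_colon hf hc,
    ← hrange, ← Set.range_comp]
  rfl

/-- If the colon ideal `I^p : u^p` (in the polarization ring
`T`) is prime, then it is generated by variables `x_{i₁j₁},…,x_{i_kj_k}` whose
first indices are pairwise distinct. -/
theorem polarization_colon_prime_generated_by_variables
    {K : Type*} [Field K] {n : ℕ} (I : Ideal (MvPolynomial (Fin n) K))
    (hI : IsMonomialIdeal I) (a : Fin n →₀ ℕ)
    (hp : ((polarIdeal I).colon (Ideal.span {mono K (polarExp a)})).IsPrime) :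
    ∃ (k : ℕ) (p : Fin k → Fin n × ℕ),
      Function.Injective (fun r => (p r).1) ∧
      (polarIdeal I).colon (Ideal.span {mono K (polarExp a)}) =
        Ideal.span (Set.range fun r => (X (p r) : MvPolynomial (Fin n × ℕ) K)) :=
  polarization_colon_prime_generated_by_variables_general I a hp
end
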